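/- Removing a node that violates a positive node constraint preserves subset repairs: let G be a data-graph, R a set of positive Reg-GXPath constraints, and v a node of G such that there exists a node expression φ ∈ R with v ∉ ⟦φ⟧_G. Then the set of subset repairs of G with respect to R equals the set of subset repairs of the induced sub-data-graph G_{V∖{v}} with respect to R. -/

import Mathlib

/-- A data-graph: a set of nodes, an edge labeling, and a data-value assignment. -/
structure DataGraph (V E Dv : Type) where
  nodes : Set V
  edges : V → V → Set E
  data : V → Dv

mutual
/-- Reg-GXPath path expressions. -/
inductive PExp (E Dv : Type) where
  | eps : PExp E Dv
  | wild : PExp E Dv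
  | lab : E → PExp E Dv
  | inv : E → PExp E Dv
  | test : NExp E Dv → PExp E Dv
  | comp : PExp E Dv → PExp E Dv → PExp E Dv
  | union : PExp E Dv → PExp E Dv → PExp E Dv
  | inter : PExp E Dv → PExp E Dv → PExp E Dv
  | star : PExp E Dv → PExp E Dv
  | compl : PExp E Dv → PExp E Dv
  | iter : PExp E Dv → ℕ → ℕ → PExp E Dv
/-- Reg-GXPath node expressions. -/
inductive NExp (E Dv : Type) where
  | neg : NExp E Dv → NExp E Dv
  | and : NExp E Dv → NExp E Dv → NExp E Dv
  | or : NExp E Dv → NExp E Dv → NExp E Dv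
  | diam : PExp E Dv → NExp E Dv
  | eqc : Dv → NExp E Dv
  | neqc : Dv → NExp E Dv
  | cmpEq : PExp E Dv → PExp E Dv → NExp E Dv
  | cmpNeq : PExp E Dv → PExp E Dv → NExp E Dv
end

variable {V E Dv : Type}

/-- Relational composition of binary relations presented as sets of pairs. -/
def dgComp (R S : Set (V × V)) : Set (V × V) := {p | ∃ y, (p.1, y) ∈ R ∧ (y, p.2) ∈ S}

/-- The identity relation on the nodes of a data-graph. -/
def DataGraph.idRel (G : DataGraph V E Dv) : Set (V × V) := {p | p.1 = p.2 ∧ p.1 ∈ G.nodes}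

/-- Iterated relational composition, with `I` as the 0-th power (identity). -/
def dgPow (I R : Set (V × V)) : ℕ → Set (V × V)
  | 0 => I
  | k + 1 => dgComp (dgPow I R k) R

mutual
/-- Semantics of path expressions on a data-graph: a set of pairs of nodes. -/
def psem (G : DataGraph V E Dv) : PExp E Dv → Set (V × V)
  | .eps => G.idRel
  | .wild => {p | p.1 ∈ G.nodes ∧ p.2 ∈ G.nodes ∧ (G.edges p.1 p.2).Nonempty}
  | .lab a => {p | p.1 ∈ G.nodes ∧ p.2 ∈ G.nodes ∧ a ∈ G.edges p.1 p.2}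
  | .inv a => {p | p.1 ∈ G.nodes ∧ p.2 ∈ G.nodes ∧ a ∈ G.edges p.2 p.1}
  | .test φ => {p | p.1 = p.2 ∧ p.1 ∈ nsem G φ}
  | .comp α β => dgComp (psem G α) (psem G β)
  | .union α β => psem G α ∪ psem G β
  | .inter α β => psem G α ∩ psem G β
  | .star α => G.idRel ∪ {p | Relation.TransGen (fun x y => (x, y) ∈ psem G α) p.1 p.2}
  | .compl α => {p | p.1 ∈ G.nodes ∧ p.2 ∈ G.nodes ∧ p ∉ psem G α}
  | .iter α n m => {p | ∃ k, n ≤ k ∧ k ≤ m ∧ p ∈ dgPow G.idRel (psem G α) k}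
/-- Semantics of node expressions on a data-graph: a set of nodes. -/
def nsem (G : DataGraph V E Dv) : NExp E Dv → Set V
  | .neg φ => {v | v ∈ G.nodes ∧ v ∉ nsem G φ}
  | .and φ ψ => nsem G φ ∩ nsem G ψ
  | .or φ ψ => nsem G φ ∪ nsem G ψ
  | .diam α => {v | ∃ w, (v, w) ∈ psem G α}
  | .eqc c => {v | v ∈ G.nodes ∧ G.data v = c}
  | .neqc c => {v | v ∈ G.nodes ∧ G.data v ≠ c}
  | .cmpEq α β => {v | ∃ v' v'', (v, v') ∈ psem G α ∧ (v, v'') ∈ psem G β ∧ G.data v' = G.data v''}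
  | .cmpNeq α β => {v | ∃ v' v'', (v, v') ∈ psem G α ∧ (v, v'') ∈ psem G β ∧ G.data v' ≠ G.data v''}
end

mutual
/-- Positive (complement/negation-free) path expressions. -/
def PExp.Positive : PExp E Dv → Prop
  | .eps => True
  | .wild => True
  | .lab _ => True
  | .inv _ => True
  | .test φ => φ.Positive
  | .comp α β => α.Positive ∧ β.Positive
  | .union α β => α.Positive ∧ β.Positive
  | .inter α β => α.Positive ∧ β.Positive
  | .star α => α.Positive
  | .compl _ => False
  | .iter α _ _ => α.Positive
/-- Positive (negation-free) node expressions. -/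
def NExp.Positive : NExp E Dv → Prop
  | .neg _ => False
  | .and φ ψ => φ.Positive ∧ ψ.Positive
  | .or φ ψ => φ.Positive ∧ ψ.Positive
  | .diam α => α.Positive
  | .eqc _ => True
  | .neqc _ => True
  | .cmpEq α β => α.Positive ∧ β.Positive
  | .cmpNeq α β => α.Positive ∧ β.Positive
end

/-- `G.Subgraph G'` : `G` is a sub-data-graph of `G'`. -/
def DataGraph.Subgraph (G G' : DataGraph V E Dv) : Prop :=
  G.nodes ⊆ G'.nodes ∧ (∀ v ∈ G.nodes, ∀ w ∈ G.nodes, G.edges v w ⊆ G'.edges v w) ∧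
    ∀ v ∈ G.nodes, G.data v = G'.data v

/-- Consistency of a data-graph w.r.t. sets of path and node constraints. -/
def DataGraph.Consistent (G : DataGraph V E Dv)
    (Rp : Set (PExp E Dv)) (Rn : Set (NExp E Dv)) : Prop :=
  (∀ α ∈ Rp, ∀ v ∈ G.nodes, ∀ w ∈ G.nodes, (v, w) ∈ psem G α) ∧
    (∀ φ ∈ Rn, ∀ v ∈ G.nodes, v ∈ nsem G φ)

/-- `H` is a subset repair of `G` w.r.t. constraints `Rp ∪ Rn`. -/
def IsSubsetRepair (H G : DataGraph V E Dv)
    (Rp : Set (PExp E Dv)) (Rn : Set (NExp E Dv)) : Prop :=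
  H.Consistent Rp Rn ∧ H.Subgraph G ∧
    ∀ K : DataGraph V E Dv, K.Consistent Rp Rn → K.Subgraph G → H.Subgraph K → K.Subgraph H

/-- `H` is a superset repair of `G` w.r.t. constraints `Rp ∪ Rn`. -/
def IsSupersetRepair (H G : DataGraph V E Dv)
    (Rp : Set (PExp E Dv)) (Rn : Set (NExp E Dv)) : Prop :=
  H.Consistent Rp Rn ∧ G.Subgraph H ∧
    ∀ K : DataGraph V E Dv, K.Consistent Rp Rn → G.Subgraph K → K.Subgraph H → H.Subgraph K
/-- The sub-data-graph of `G` induced by the node set `S`. -/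
def DataGraph.induced {V E Dv : Type} (G : DataGraph V E Dv) (S : Set V) : DataGraph V E Dv :=
  ⟨G.nodes ∩ S,
   fun a b => {e | e ∈ G.edges a b ∧ a ∈ G.nodes ∩ S ∧ b ∈ G.nodes ∩ S},
   G.data⟩

section Aux
variable {V E Dv : Type}

theorem dgPow_bound {N : Set V} {I R : Set (V × V)}
    (hI : ∀ p ∈ I, p.1 ∈ N ∧ p.2 ∈ N) (hR : ∀ p ∈ R, p.1 ∈ N ∧ p.2 ∈ N) :
    ∀ k, ∀ p ∈ dgPow I R k, p.1 ∈ N ∧ p.2 ∈ N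
  | 0, p, hp => hI p hp
  | k + 1, p, hp => by
    obtain ⟨y, h1, h2⟩ := hp
    exact ⟨(dgPow_bound hI hR k _ h1).1, (hR _ h2).2⟩

theorem idRel_mono {G G' : DataGraph V E Dv} (h : G.Subgraph G') :
    G.idRel ⊆ G'.idRel := fun p hp => ⟨hp.1, h.1 hp.2⟩

theorem dgPow_mono {I I' R R' : Set (V × V)} (hI : I ⊆ I') (hR : R ⊆ R') :
    ∀ k, dgPow I R k ⊆ dgPow I' R' k
  | 0, p, hp => hI hp
  | k + 1, p, hp => by
    obtain ⟨y, h1, h2⟩ := hp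
    exact ⟨y, dgPow_mono hI hR k h1, hR h2⟩

theorem DataGraph.Subgraph.trans {H K G : DataGraph V E Dv}
    (h1 : H.Subgraph K) (h2 : K.Subgraph G) : H.Subgraph G := by
  refine ⟨h1.1.trans h2.1, fun a ha b hb => ?_, fun a ha => ?_⟩
  · exact (h1.2.1 a ha b hb).trans (h2.2.1 a (h1.1 ha) b (h1.1 hb))
  · rw [h1.2.2 a ha, h2.2.2 a (h1.1 ha)]

mutual
theorem psem_bound {G : DataGraph V E Dv} :
    ∀ α : PExp E Dv, α.Positive → ∀ p ∈ psem G α, p.1 ∈ G.nodes ∧ p.2 ∈ G.nodes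
  | .eps, _, p, hp => by obtain ⟨h1, h2⟩ := hp; exact ⟨h2, h1 ▸ h2⟩
  | .wild, _, p, hp => ⟨hp.1, hp.2.1⟩
  | .lab a, _, p, hp => ⟨hp.1, hp.2.1⟩
  | .inv a, _, p, hp => ⟨hp.1, hp.2.1⟩
  | .test ψ, hpos, p, hp => by
      obtain ⟨h1, h2⟩ := hp
      have := nsem_bound ψ hpos _ h2
      exact ⟨this, h1 ▸ this⟩
  | .comp α β, hpos, p, hp => by
      obtain ⟨y, h1, h2⟩ := hp
      exact ⟨(psem_bound α hpos.1 _ h1).1, (psem_bound β hpos.2 _ h2).2⟩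
  | .union α β, hpos, p, hp => by
      cases hp with
      | inl h => exact psem_bound α hpos.1 p h
      | inr h => exact psem_bound β hpos.2 p h
  | .inter α β, hpos, p, hp => psem_bound α hpos.1 p hp.1
  | .star α, hpos, p, hp => by
      cases hp with
      | inl h => exact ⟨h.2, h.1 ▸ h.2⟩
      | inr h =>
        obtain ⟨a, b⟩ := p
        simp only [Set.mem_setOf_eq] at h
        constructor
        · induction h with
          | single h => exact (psem_bound α hpos _ h).1
          | tail _ _ ih => exact ih
        · induction h with
          | single h => exact (psem_bound α hpos _ h).2
          | tail _ h _ => exact (psem_bound α hpos _ h).2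
  | .compl α, hpos, p, hp => absurd hpos (by simp [PExp.Positive])
  | .iter α n m, hpos, p, hp => by
      obtain ⟨k, _, _, hk⟩ := hp
      exact dgPow_bound (fun p hp => ⟨hp.2, hp.1 ▸ hp.2⟩) (psem_bound α hpos) k _ hk

theorem nsem_bound {G : DataGraph V E Dv} :
    ∀ φ : NExp E Dv, φ.Positive → ∀ x ∈ nsem G φ, x ∈ G.nodes
  | .neg _, hpos, _, _ => absurd hpos (by simp [NExp.Positive])
  | .and φ ψ, hpos, x, hx => nsem_bound φ hpos.1 x hx.1
  | .or φ ψ, hpos, x, hx => by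
      cases hx with
      | inl h => exact nsem_bound φ hpos.1 x h
      | inr h => exact nsem_bound ψ hpos.2 x h
  | .diam α, hpos, x, hx => by
      obtain ⟨w, hw⟩ := hx
      exact (psem_bound α hpos _ hw).1
  | .eqc c, _, x, hx => hx.1
  | .neqc c, _, x, hx => hx.1
  | .cmpEq α β, hpos, x, hx => by
      obtain ⟨a, b, h1, _, _⟩ := hx
      exact (psem_bound α hpos.1 _ h1).1
  | .cmpNeq α β, hpos, x, hx => by
      obtain ⟨a, b, h1, _, _⟩ := hx
      exact (psem_bound α hpos.1 _ h1).1
end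

mutual
theorem psem_mono {G G' : DataGraph V E Dv} (h : G.Subgraph G') :
    ∀ α : PExp E Dv, α.Positive → psem G α ⊆ psem G' α
  | .eps, _, p, hp => ⟨hp.1, h.1 hp.2⟩
  | .wild, _, p, hp =>
      ⟨h.1 hp.1, h.1 hp.2.1, hp.2.2.mono (h.2.1 _ hp.1 _ hp.2.1)⟩
  | .lab a, _, p, hp => ⟨h.1 hp.1, h.1 hp.2.1, h.2.1 _ hp.1 _ hp.2.1 hp.2.2⟩
  | .inv a, _, p, hp => ⟨h.1 hp.1, h.1 hp.2.1, h.2.1 _ hp.2.1 _ hp.1 hp.2.2⟩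
  | .test ψ, hpos, p, hp => ⟨hp.1, nsem_mono h ψ hpos hp.2⟩
  | .comp α β, hpos, p, hp => by
      obtain ⟨y, h1, h2⟩ := hp
      exact ⟨y, psem_mono h α hpos.1 h1, psem_mono h β hpos.2 h2⟩
  | .union α β, hpos, p, hp => by
      cases hp with
      | inl h1 => exact Or.inl (psem_mono h α hpos.1 h1)
      | inr h1 => exact Or.inr (psem_mono h β hpos.2 h1)
  | .inter α β, hpos, p, hp =>
      ⟨psem_mono h α hpos.1 hp.1, psem_mono h β hpos.2 hp.2⟩
  | .star α, hpos, p, hp => by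
      cases hp with
      | inl h1 => exact Or.inl ⟨h1.1, h.1 h1.2⟩
      | inr h1 =>
        exact Or.inr (Relation.TransGen.mono
          (p := fun x y => (x, y) ∈ psem G' α) (fun x y hxy => psem_mono h α hpos hxy) _ _ h1)
  | .compl α, hpos, p, hp => absurd hpos (by simp [PExp.Positive])
  | .iter α n m, hpos, p, hp => by
      obtain ⟨k, hn1, hn2, hk⟩ := hp
      exact ⟨k, hn1, hn2, dgPow_mono (idRel_mono h) (psem_mono h α hpos) k hk⟩

theorem nsem_mono {G G' : DataGraph V E Dv} (h : G.Subgraph G') :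
    ∀ φ : NExp E Dv, φ.Positive → nsem G φ ⊆ nsem G' φ
  | .neg _, hpos, _, _ => absurd hpos (by simp [NExp.Positive])
  | .and φ ψ, hpos, x, hx =>
      ⟨nsem_mono h φ hpos.1 hx.1, nsem_mono h ψ hpos.2 hx.2⟩
  | .or φ ψ, hpos, x, hx => by
      cases hx with
      | inl h1 => exact Or.inl (nsem_mono h φ hpos.1 h1)
      | inr h1 => exact Or.inr (nsem_mono h ψ hpos.2 h1)
  | .diam α, hpos, x, hx => by
      obtain ⟨w, hw⟩ := hx
      exact ⟨w, psem_mono h α hpos hw⟩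
  | .eqc c, _, x, hx => ⟨h.1 hx.1, (h.2.2 x hx.1) ▸ hx.2⟩
  | .neqc c, _, x, hx => ⟨h.1 hx.1, (h.2.2 x hx.1) ▸ hx.2⟩
  | .cmpEq α β, hpos, x, hx => by
      obtain ⟨a, b, h1, h2, h3⟩ := hx
      refine ⟨a, b, psem_mono h α hpos.1 h1, psem_mono h β hpos.2 h2, ?_⟩
      rw [← h.2.2 a (psem_bound α hpos.1 _ h1).2, ← h.2.2 b (psem_bound β hpos.2 _ h2).2]
      exact h3
  | .cmpNeq α β, hpos, x, hx => by
      obtain ⟨a, b, h1, h2, h3⟩ := hx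
      refine ⟨a, b, psem_mono h α hpos.1 h1, psem_mono h β hpos.2 h2, ?_⟩
      rw [← h.2.2 a (psem_bound α hpos.1 _ h1).2, ← h.2.2 b (psem_bound β hpos.2 _ h2).2]
      exact h3
end

end Aux

/-- removing a node violating a positive node constraint preserves
the set of subset repairs. -/
theorem stmt2 {V E Dv : Type} (G : DataGraph V E Dv)
    (Rp : Set (PExp E Dv)) (Rn : Set (NExp E Dv))
    (hp : ∀ α ∈ Rp, PExp.Positive α) (hn : ∀ φ ∈ Rn, NExp.Positive φ)
    (v : V) (hv : v ∈ G.nodes) (φ : NExp E Dv) (hφ : φ ∈ Rn) (hviol : v ∉ nsem G φ) :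
    {H : DataGraph V E Dv | IsSubsetRepair H G Rp Rn} =
      {H : DataGraph V E Dv | IsSubsetRepair H (G.induced (G.nodes \ {v})) Rp Rn} := by
  have hGind : (G.induced (G.nodes \ {v})).Subgraph G :=
    ⟨Set.inter_subset_left, fun a _ b _ e he => he.1, fun a _ => rfl⟩
  have key : ∀ H : DataGraph V E Dv, H.Consistent Rp Rn → H.Subgraph G → v ∉ H.nodes := by
    intro H hc hs hvH
    exact hviol (nsem_mono hs φ (hn φ hφ) (hc.2 φ hφ v hvH))
  have toInd : ∀ H : DataGraph V E Dv, H.Subgraph G → v ∉ H.nodes →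
      H.Subgraph (G.induced (G.nodes \ {v})) := by
    intro H hs hvH
    have hmem : ∀ a ∈ H.nodes, a ∈ G.nodes ∩ (G.nodes \ {v}) := by
      intro a ha
      exact ⟨hs.1 ha, hs.1 ha, fun heq => hvH ((Set.mem_singleton_iff.mp heq) ▸ ha)⟩
    exact ⟨fun a ha => hmem a ha,
      fun a ha b hb e he => ⟨hs.2.1 a ha b hb he, hmem a ha, hmem b hb⟩,
      fun a ha => hs.2.2 a ha⟩
  ext H
  simp only [Set.mem_setOf_eq]
  constructor
  · rintro ⟨hc, hs, hmax⟩
    exact ⟨hc, toInd H hs (key H hc hs),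
      fun K hKc hKs hHK => hmax K hKc (hKs.trans hGind) hHK⟩
  · rintro ⟨hc, hs, hmax⟩
    exact ⟨hc, hs.trans hGind,
      fun K hKc hKs hHK => hmax K hKc (toInd K hKs (key K hKc hKs)) hHK⟩
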